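/- arXiv:2412.08898 — 5 statements merged into one kernel-verified Lean document; each statement's English description precedes it below -/
import Mathlib

section
/- Suppose H_d : ℝ⁴ → ℝ satisfies C·e₂²/2 ≤ H_d(e) for all e, and along a trajectory e(t) the value H_d(e(t)) is nonincreasing in t whenever x₂(t) = x₂* + e₂(t) > RP/x₂*. If the initial state satisfies √((2/C)H_d(e(0))) < x₂* - RP/x₂*, then for all t ≥ 0, √((2/C)H_d(e(t))) < x₂* - RP/x₂* (the sublevel set B₂ is forward invariant). -/
/-!
The quantity `√((2/C) H_d(e))` bounds `|e₂|`, so while it stays below `x₂* - RP/x₂*` the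
condition `x₂ > RP/x₂*` holds and `H_d(e(t))` cannot increase. At the first time the bound fails,
continuity would still give `H_d(e(t)) ≤ H_d(e(0))`, a contradiction.
-/

open Set

theorem Continuous.forall_lt_of_le_initial_while_lt {V : ℝ → ℝ} (hV : Continuous V) {a c : ℝ}
    (hle : ∀ t ≥ a, (∀ u ∈ Icc a t, V u < c) → V t ≤ V a) (ha : V a < c) :
    ∀ t ≥ a, V t < c := by
  by_contra! ⟨T, hTa, hTc⟩
  set B : Set ℝ := {t | a ≤ t ∧ c ≤ V t}
  have hBclosed : IsClosed B :=
    (isClosed_le continuous_const continuous_id).inter (isClosed_le continuous_const hV)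
  have hBbdd : BddBelow B := ⟨a, fun t ht => ht.1⟩
  have hexit : sInf B ∈ B := hBclosed.csInf_mem ⟨T, hTa, hTc⟩ hBbdd
  have hbefore : ∀ u ∈ Ico a (sInf B), V u < c := fun u hu => by
    by_contra! hcu
    exact (csInf_le hBbdd ⟨hu.1, hcu⟩).not_gt hu.2
  have hpos : a < sInf B := hexit.1.lt_of_ne fun h => (h ▸ ha).not_ge hexit.2
  have hsub : Ico a (sInf B) ⊆ {t | V t ≤ V a} := fun s hs =>
    hle s hs.1 fun u hu => hbefore u ⟨hu.1, hu.2.trans_lt hs.2⟩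
  have hclosure : Icc a (sInf B) ⊆ {t | V t ≤ V a} := by
    rw [← closure_Ico hpos.ne]
    exact closure_minimal hsub (isClosed_le hV continuous_const)
  exact (hclosure ⟨hpos.le, le_rfl⟩ |>.trans_lt ha).not_ge hexit.2

theorem abs_le_sqrt_of_half_mul_sq_le {C y h : ℝ} (hC : 0 < C) (hy : 1 / 2 * C * y ^ 2 ≤ h) :
    |y| ≤ Real.sqrt (2 / C * h) := by
  rw [← Real.sqrt_sq_eq_abs]
  gcongr
  calc y ^ 2 = 2 / C * (1 / 2 * C * y ^ 2) := by field_simp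
    _ ≤ 2 / C * h := by gcongr

theorem stmt_5_general (C R P x₂s : ℝ) (hC : 0 < C)
    (e : ℝ → ℝ × ℝ × ℝ × ℝ) (hcont : Continuous e)
    (Hd : ℝ × ℝ × ℝ × ℝ → ℝ) (hHdcont : Continuous Hd)
    -- (i): (1/2) C e₂² ≤ H_d(e) for all states
    (hlow : ∀ x : ℝ × ℝ × ℝ × ℝ, (1/2) * C * x.2.1 ^ 2 ≤ Hd x)
    -- (ii): H_d(e(t)) is nonincreasing on any interval where x₂ = x₂* + e₂ > RP/x₂*
    (hmono : ∀ s t : ℝ, 0 ≤ s → s ≤ t →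
      (∀ u ∈ Set.Icc s t, x₂s + (e u).2.1 > R * P / x₂s) → Hd (e t) ≤ Hd (e s))
    (hinit : Real.sqrt ((2 / C) * Hd (e 0)) < x₂s - R * P / x₂s) :
    ∀ t ≥ 0, Real.sqrt ((2 / C) * Hd (e t)) < x₂s - R * P / x₂s := by
  have hcontV : Continuous fun t => Real.sqrt ((2 / C) * Hd (e t)) := by fun_prop
  refine hcontV.forall_lt_of_le_initial_while_lt (fun t ht hbelow => ?_) hinit
  have hx₂ (u : ℝ) (hu : u ∈ Icc 0 t) : x₂s + (e u).2.1 > R * P / x₂s := by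
    have := (neg_le_abs (e u).2.1).trans (abs_le_sqrt_of_half_mul_sq_le hC (hlow (e u)))
    linarith [hbelow u hu]
  gcongr
  exact hmono 0 t le_rfl ht hx₂

theorem stmt_5 (C R P x₂s : ℝ) (hC : 0 < C) (hR : 0 < R) (hP : 0 < P)
    (hx₂s : 0 < x₂s) (hdom : R * P < x₂s ^ 2)
    (e : ℝ → ℝ × ℝ × ℝ × ℝ) (hcont : Continuous e)
    (Hd : ℝ × ℝ × ℝ × ℝ → ℝ) (hHdcont : Continuous Hd)
    -- (i): (1/2) C e₂² ≤ H_d(e) for all states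
    (hlow : ∀ x : ℝ × ℝ × ℝ × ℝ, (1/2) * C * x.2.1 ^ 2 ≤ Hd x)
    -- (ii): H_d(e(t)) is nonincreasing on any interval where x₂ = x₂* + e₂ > RP/x₂*
    (hmono : ∀ s t : ℝ, 0 ≤ s → s ≤ t →
      (∀ u ∈ Set.Icc s t, x₂s + (e u).2.1 > R * P / x₂s) → Hd (e t) ≤ Hd (e s))
    (hinit : Real.sqrt ((2 / C) * Hd (e 0)) < x₂s - R * P / x₂s) :
    ∀ t ≥ 0, Real.sqrt ((2 / C) * Hd (e t)) < x₂s - R * P / x₂s :=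
  stmt_5_general C R P x₂s hC e hcont Hd hHdcont hlow hmono hinit
end

section
/- The largest invariant set of the closed-loop system ė = (J - D)∇H_d contained in {e : Ḣ_d(e) = 0} = {e : D∇H_d(e) = 0} is the singleton {0}, provided: (i) D∇H_d(e) = 0 implies e₁ = e₂ = e₃ = 0; (ii) on the invariant subsystem with e₁ = e₂ = e₃ = 0, the dynamics force x_c = 0 at equilibrium (since ė₁ = 0 requires the controller term αr k(αe₁ - x_c/L₁) = 0, giving x_c = 0). Hence (0,0,0,0) is the only point in the largest invariant set. -/
theorem HasDerivAt.eq_zero_of_eventuallyEq_const {𝕜 F : Type*} [NontriviallyNormedField 𝕜]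
    [NormedAddCommGroup F] [NormedSpace 𝕜 F] {f : 𝕜 → F} {f' : F} {x : 𝕜} (c : F)
    (hf : HasDerivAt f f' x) (hc : f =ᶠ[nhds x] fun _ => c) : f' = 0 :=
  hf.unique ((hasDerivAt_const x c).congr_of_eventuallyEq hc)

theorem stmt_10_general (L₁ C k α r : ℝ)
    (hL₁ : 0 < L₁) (hk : 0 < k) (hα : 0 < α)
    (hr : 0 < r)
    (e₁ e₂ e₃ xc : ℝ → ℝ)
    -- closed-loop dynamics ė = F ∇H_d, eq. (13)
    (hde₁ : ∀ t, HasDerivAt e₁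
      (-(r / L₁^2) * (L₁ * e₁ t + k * α * L₁ * (α * L₁ * e₁ t - xc t))
        - (1 / (C * L₁)) * (C * e₂ t)) t)
    -- the trajectory lies in the zero-dissipation set {Ḣ_d = 0}: e₁ = e₂ = e₃ = 0
    (hzero : ∀ t, e₁ t = 0 ∧ e₂ t = 0 ∧ e₃ t = 0) :
    ∀ t, xc t = 0 := by
  intro t
  have hflow := (hde₁ t).eq_zero_of_eventuallyEq_const 0
    (Filter.Eventually.of_forall fun s => (hzero s).1)
  obtain ⟨he₁, he₂, -⟩ := hzero t
  rw [he₁, he₂] at hflow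
  -- on `e₁ = e₂ = 0` only the controller term `r k α x_c / L₁` survives in `ė₁`
  have hctrl : r * k * α / L₁ * xc t = 0 := by
    rw [← hflow]; field_simp; ring
  simpa [hr.ne', hk.ne', hα.ne', hL₁.ne'] using hctrl

/-- The largest invariant set of the closed-loop PH system (eq. (13)) contained in
`{e : Ḣ_d(e) = 0}` (i.e. `e₁ = e₂ = e₃ = 0`) is the singleton `{0}`: any trajectory
of (13) that stays in this set must also have `x_c ≡ 0`. -/
theorem stmt_10 (L₁ C L₂ k α r R P R₂ x₂s : ℝ)
    (hL₁ : 0 < L₁) (hC : 0 < C) (hL₂ : 0 < L₂) (hk : 0 < k) (hα : 0 < α)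
    (hr : 0 < r) (hR : 0 < R) (hP : 0 < P) (hR₂ : 0 < R₂) (hx₂s : 0 < x₂s)
    (e₁ e₂ e₃ xc x₂ : ℝ → ℝ)
    (hx₂ : ∀ t, x₂ t = x₂s + e₂ t)
    (hcond : ∀ t, R * P / (x₂ t * x₂s) < 1)
    -- closed-loop dynamics ė = F ∇H_d, eq. (13)
    (hde₁ : ∀ t, HasDerivAt e₁
      (-(r / L₁^2) * (L₁ * e₁ t + k * α * L₁ * (α * L₁ * e₁ t - xc t))
        - (1 / (C * L₁)) * (C * e₂ t)) t)
    (hde₂ : ∀ t, HasDerivAt e₂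
      ((1 / (C * L₁)) * (L₁ * e₁ t + k * α * L₁ * (α * L₁ * e₁ t - xc t))
        + (-(1 / (R * C^2)) + P / (x₂ t * x₂s * C^2)) * (C * e₂ t)
        - (1 / (C * L₂)) * (L₂ * e₃ t)
        + (α / C) * (-(k * (α * L₁ * e₁ t - xc t)))) t)
    (hde₃ : ∀ t, HasDerivAt e₃
      ((1 / (C * L₂)) * (C * e₂ t) - (R₂ / L₂^2) * (L₂ * e₃ t)) t)
    (hdxc : ∀ t, HasDerivAt xc (-(α / C) * (C * e₂ t)) t)
    -- the trajectory lies in the zero-dissipation set {Ḣ_d = 0}: e₁ = e₂ = e₃ = 0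
    (hzero : ∀ t, e₁ t = 0 ∧ e₂ t = 0 ∧ e₃ t = 0) :
    ∀ t, xc t = 0 :=
  stmt_10_general L₁ C k α r hL₁ hk hα hr e₁ e₂ e₃ xc hde₁ hzero
end

section
/- Substituting the control law u = -αrk(αe₁ - x_c/L₁) and ẋ_c = -αe₂ into the open-loop error PH system ė = F₀∇H₁ + (u,0,0)ᵀ yields the closed-loop PH system ė_ext = F∇H_d with extended state (e₁,e₂,e₃,x_c), where ∇H_d = (L₁e₁ + kαL₁(αL₁e₁ - x_c), Ce₂, L₂e₃, -k(αL₁e₁ - x_c))ᵀ and F the matrix in equation (13); in particular the (4,2) and (2,4) entries of F are -α/C and α/C respectively. -/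
theorem stmt_12_general (L₁ C L₂ k α r R P R₂ x₂s : ℝ)
    (hL₁ : 0 < L₁) (hC : 0 < C)
    (e₁ e₂ e₃ xc x₂ u : ℝ → ℝ)
    -- control law and controller state dynamics
    (hu : ∀ t, u t = -(α * r * k) * (α * e₁ t - xc t / L₁))
    (hxc : ∀ t, HasDerivAt xc (-(α * e₂ t)) t)
    -- open-loop error dynamics ė = F₀ ∇H₁ + (u,0,0)ᵀ
    (hoe₁ : ∀ t, HasDerivAt e₁
      (-(r / L₁^2) * (L₁ * e₁ t) - (1 / (C * L₁)) * (C * e₂ t) + u t) t)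
    (hoe₂ : ∀ t, HasDerivAt e₂
      ((1 / (C * L₁)) * (L₁ * e₁ t)
        + (-(1 / (R * C^2)) + P / (x₂ t * x₂s * C^2)) * (C * e₂ t)
        - (1 / (C * L₂)) * (L₂ * e₃ t)) t)
    (hoe₃ : ∀ t, HasDerivAt e₃
      ((1 / (C * L₂)) * (C * e₂ t) - (R₂ / L₂^2) * (L₂ * e₃ t)) t) :
    -- closed-loop PH form ė_ext = F ∇H_d
    (∀ t, HasDerivAt e₁
      (-(r / L₁^2) * (L₁ * e₁ t + k * α * L₁ * (α * L₁ * e₁ t - xc t))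
        - (1 / (C * L₁)) * (C * e₂ t)) t) ∧
    (∀ t, HasDerivAt e₂
      ((1 / (C * L₁)) * (L₁ * e₁ t + k * α * L₁ * (α * L₁ * e₁ t - xc t))
        + (-(1 / (R * C^2)) + P / (x₂ t * x₂s * C^2)) * (C * e₂ t)
        - (1 / (C * L₂)) * (L₂ * e₃ t)
        + (α / C) * (-(k * (α * L₁ * e₁ t - xc t)))) t) ∧
    (∀ t, HasDerivAt e₃
      ((1 / (C * L₂)) * (C * e₂ t) - (R₂ / L₂^2) * (L₂ * e₃ t)) t) ∧
    (∀ t, HasDerivAt xc (-(α / C) * (C * e₂ t)) t) := by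
  have hL₁ne := hL₁.ne'
  have hCne := hC.ne'
  refine ⟨fun t => (hoe₁ t).congr_deriv ?_, fun t => (hoe₂ t).congr_deriv ?_, hoe₃,
    fun t => (hxc t).congr_deriv ?_⟩
  -- the shaping term `-(r/L₁²)·kαL₁(αL₁e₁ - x_c)` is exactly the control `u`
  · rw [hu]
    field_simp
    ring
  -- the term `kαL₁(αL₁e₁ - x_c)/(CL₁)` cancels against the `(2,4)` entry `α/C` of `F`
  · field_simp
    ring
  · field_simp

/-- Substituting the control law `u = -αrk(αe₁ - x_c/L₁)` and `ẋ_c = -αe₂` into the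
open-loop error port-Hamiltonian system yields the closed-loop PH system
`ė_ext = F ∇H_d` with `∇H_d = (L₁e₁ + kαL₁(αL₁e₁ - x_c), Ce₂, L₂e₃, -k(αL₁e₁ - x_c))`,
where the (2,4) entry of `F` is `α/C` and the (4,2) entry is `-α/C`. -/
theorem stmt_12 (L₁ C L₂ k α r R P R₂ x₂s : ℝ)
    (hL₁ : 0 < L₁) (hC : 0 < C) (hL₂ : 0 < L₂) (hk : 0 < k) (hα : 0 < α)
    (hr : 0 < r) (hR : 0 < R) (hP : 0 < P) (hR₂ : 0 < R₂) (hx₂s : 0 < x₂s)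
    (e₁ e₂ e₃ xc x₂ u : ℝ → ℝ)
    -- control law and controller state dynamics
    (hu : ∀ t, u t = -(α * r * k) * (α * e₁ t - xc t / L₁))
    (hxc : ∀ t, HasDerivAt xc (-(α * e₂ t)) t)
    -- open-loop error dynamics ė = F₀ ∇H₁ + (u,0,0)ᵀ
    (hoe₁ : ∀ t, HasDerivAt e₁
      (-(r / L₁^2) * (L₁ * e₁ t) - (1 / (C * L₁)) * (C * e₂ t) + u t) t)
    (hoe₂ : ∀ t, HasDerivAt e₂
      ((1 / (C * L₁)) * (L₁ * e₁ t)
        + (-(1 / (R * C^2)) + P / (x₂ t * x₂s * C^2)) * (C * e₂ t)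
        - (1 / (C * L₂)) * (L₂ * e₃ t)) t)
    (hoe₃ : ∀ t, HasDerivAt e₃
      ((1 / (C * L₂)) * (C * e₂ t) - (R₂ / L₂^2) * (L₂ * e₃ t)) t) :
    -- closed-loop PH form ė_ext = F ∇H_d
    (∀ t, HasDerivAt e₁
      (-(r / L₁^2) * (L₁ * e₁ t + k * α * L₁ * (α * L₁ * e₁ t - xc t))
        - (1 / (C * L₁)) * (C * e₂ t)) t) ∧
    (∀ t, HasDerivAt e₂
      ((1 / (C * L₁)) * (L₁ * e₁ t + k * α * L₁ * (α * L₁ * e₁ t - xc t))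
        + (-(1 / (R * C^2)) + P / (x₂ t * x₂s * C^2)) * (C * e₂ t)
        - (1 / (C * L₂)) * (L₂ * e₃ t)
        + (α / C) * (-(k * (α * L₁ * e₁ t - xc t)))) t) ∧
    (∀ t, HasDerivAt e₃
      ((1 / (C * L₂)) * (C * e₂ t) - (R₂ / L₂^2) * (L₂ * e₃ t)) t) ∧
    (∀ t, HasDerivAt xc (-(α / C) * (C * e₂ t)) t) :=
  stmt_12_general L₁ C L₂ k α r R P R₂ x₂s hL₁ hC e₁ e₂ e₃ xc x₂ u hu hxc hoe₁ hoe₂ hoe₃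
end

section
/- For the disturbance observer ẑ' = (A - l(x)M)z + (terms), with estimation error ζ̃ = ẑ + p(x)·(scaling) - ζ, the error satisfies the autonomous linear ODE ζ̃' = (A - l(x)M)ζ̃ where l(x) = ∂p/∂x, provided the system dynamics used in the observer match the true dynamics exactly (d generated by ζ' = Aζ, d = Mζ). -/
/-!
Along a trajectory, `L • p (x t)` has derivative `(L * x') • l (x t) = (g + M ⬝ᵥ ζ) • l (x t)`,
so in the derivative of the estimate `ẑ = z + L • p x` it cancels the unknown `g` in the observer's
correction term `-(M ⬝ᵥ ẑ + g) • l` and replaces it by the unmeasured `M ⬝ᵥ ζ`, leaving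
`-(M ⬝ᵥ (ẑ - ζ)) • l`. Subtracting `ζ' = A ζ` gives the linear error dynamics.
-/

open Matrix

theorem HasDerivAt.const_smul_comp_of_div {𝕜 E : Type*} [NontriviallyNormedField 𝕜]
    [NormedAddCommGroup E] [NormedSpace 𝕜 E] {p : 𝕜 → E} {x : 𝕜 → 𝕜} {v : E} {L d t : 𝕜}
    (hL : L ≠ 0)
    (hp : HasDerivAt p v (x t)) (hx : HasDerivAt x (d / L) t) :
    HasDerivAt (fun s => L • p (x s)) (d • v) t := by
  have h := (hp.scomp t hx).const_smul L
  rwa [smul_smul, mul_div_cancel₀ d hL] at h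

/-- Scalar-state disturbance observer: the estimation error
`ζ̃ = (z + L·p(x)) - ζ` satisfies the autonomous linear ODE
`ζ̃' = (A - l(x)·M) ζ̃`, i.e. `ζ̃' = A ζ̃ - (M ⬝ᵥ ζ̃) • l(x)`. -/
theorem stmt_16 (m : ℕ) (L : ℝ) (hL : 0 < L)
    (A : Matrix (Fin m) (Fin m) ℝ) (Mv : Fin m → ℝ)
    (g : ℝ → ℝ → ℝ)
    (x : ℝ → ℝ) (ζ z : ℝ → (Fin m → ℝ))
    (p l : ℝ → (Fin m → ℝ))
    (hp : ∀ y, HasDerivAt p (l y) y)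
    -- exogenous disturbance system: ζ' = Aζ, d = M ζ
    (hζ : ∀ t, HasDerivAt ζ (A.mulVec (ζ t)) t)
    -- true dynamics: L·x' = g(x,t) + d
    (hx : ∀ t, HasDerivAt x ((g (x t) t + Mv ⬝ᵥ ζ t) / L) t)
    -- observer internal state: z' = (A - l(x)M)z + A·L·p(x) - l(x)(M·L·p(x) + g(x,t))
    (hz : ∀ t, HasDerivAt z
      (A.mulVec (z t + L • p (x t))
        - (Mv ⬝ᵥ (z t + L • p (x t)) + g (x t) t) • l (x t)) t) :
    ∀ t, HasDerivAt (fun s => (z s + L • p (x s)) - ζ s)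
      (A.mulVec ((z t + L • p (x t)) - ζ t)
        - (Mv ⬝ᵥ ((z t + L • p (x t)) - ζ t)) • l (x t)) t := by
  intro t
  have hzhat := (hz t).add ((hp (x t)).const_smul_comp_of_div hL.ne' (hx t))
  refine (hzhat.sub (hζ t)).congr_deriv ?_
  rw [mulVec_sub, dotProduct_sub]
  module
end

section
/- For the simplified practical case (power line and parasitic resistance neglected, disturbance d₁ = E constant), the observer d̂₁ = z₁ + L₁ηx₁ with ż₁ = ηx₂ - ημd̂₁ (where the true dynamics are L₁x₁' = μE - x₂, η > 0, and μ(t) > 0 bounded below by μ_min > 0) yields an estimation error ẽ = d̂₁ - E satisfying ẽ' = -ημẽ, hence |ẽ(t)| ≤ |ẽ(0)|e^{-ημ_min t} → 0. -/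
/-!
Differentiating `d̂₁ = z + L₁ η x₁` along the dynamics, the `x₂` terms cancel and, since `E` is
constant, the error `ẽ = d̂₁ - E` obeys the linear equation `ẽ' = -η μ ẽ`. Because `η μ ≥ η μ_min`,
the function `(ẽ(t) e^{η μ_min t})²` is nonincreasing, which is the exponential bound.
-/

open Real Filter Topology

theorem observerError_hasDerivAt {E L₁ η : ℝ} (hL₁ : L₁ ≠ 0) {x₁ x₂ μ z : ℝ → ℝ} {t : ℝ}
    (hx₁ : HasDerivAt x₁ ((μ t * E - x₂ t) / L₁) t)
    (hz : HasDerivAt z (η * x₂ t - η * μ t * (z t + L₁ * η * x₁ t)) t) :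
    HasDerivAt (fun s => (z s + L₁ * η * x₁ s) - E)
      (-(η * μ t) * ((z t + L₁ * η * x₁ t) - E)) t := by
  refine ((hz.add (hx₁.const_mul (L₁ * η))).sub_const E).congr_deriv ?_
  field_simp
  ring

section LinearDecay

variable {f a : ℝ → ℝ} {c : ℝ}

theorem antitone_sq_mul_exp_of_hasDerivAt_neg_mul (hf : ∀ t, HasDerivAt f (-a t * f t) t)
    (ha : ∀ t, c ≤ a t) : Antitone fun t => (f t * exp (c * t)) ^ 2 := by
  have hderiv : ∀ t, HasDerivAt (fun t => (f t * exp (c * t)) ^ 2)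
      (2 * (f t * exp (c * t)) ^ 2 * (c - a t)) t := by
    intro t
    have hexp : HasDerivAt (fun t => exp (c * t)) (exp (c * t) * c) t := by
      simpa using ((hasDerivAt_id t).const_mul c).exp
    refine (((hf t).mul hexp).pow 2).congr_deriv ?_
    simp only [Pi.mul_apply]
    ring
  refine antitone_of_deriv_nonpos (fun t => (hderiv t).differentiableAt) fun t => ?_
  rw [(hderiv t).deriv]
  exact mul_nonpos_of_nonneg_of_nonpos (by positivity) (sub_nonpos.mpr (ha t))

theorem abs_le_abs_mul_exp_of_hasDerivAt_neg_mul (hf : ∀ t, HasDerivAt f (-a t * f t) t)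
    (ha : ∀ t, c ≤ a t) {s t : ℝ} (hst : s ≤ t) :
    |f t| ≤ |f s| * exp (-c * (t - s)) := by
  have hsq := antitone_sq_mul_exp_of_hasDerivAt_neg_mul hf ha hst
  have habs : |f t| * exp (c * t) ≤ |f s| * exp (c * s) := by
    simpa only [abs_mul, abs_exp] using sq_le_sq.mp hsq
  calc |f t| = |f t| * exp (c * t) * exp (-c * t) := by
        rw [mul_assoc, ← exp_add, ← add_mul, add_neg_cancel, zero_mul, exp_zero, mul_one]
    _ ≤ |f s| * exp (c * s) * exp (-c * t) := by gcongr
    _ = |f s| * exp (-c * (t - s)) := by rw [mul_assoc, ← exp_add]; ring_nf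

theorem tendsto_zero_of_abs_le_mul_exp_neg {C : ℝ} (hc : 0 < c)
    (hf : ∀ t ≥ 0, |f t| ≤ C * exp (-c * t)) : Tendsto f atTop (𝓝 0) := by
  have hbound : Tendsto (fun t => C * exp (-c * t)) atTop (𝓝 0) := by
    simpa using (tendsto_exp_atBot.comp
      (tendsto_id.const_mul_atTop_of_neg (neg_neg_of_pos hc))).const_mul C
  refine squeeze_zero_norm' ?_ hbound
  filter_upwards [eventually_ge_atTop 0] with t ht
  exact hf t ht

end LinearDecay

theorem stmt_17_general (E L₁ η μmin : ℝ) (hL₁ : 0 < L₁) (hη : 0 < η)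
    (hμmin : 0 < μmin)
    (x₁ x₂ μ z : ℝ → ℝ)
    (hμ : ∀ t, μmin ≤ μ t ∧ μ t ≤ 1)
    -- simplified dynamics L₁ x₁' = μE - x₂
    (hx₁ : ∀ t, HasDerivAt x₁ ((μ t * E - x₂ t) / L₁) t)
    -- observer: d̂₁ = z + L₁ η x₁, z' = η x₂ - η μ d̂₁
    (hz : ∀ t, HasDerivAt z (η * x₂ t - η * μ t * (z t + L₁ * η * x₁ t)) t) :
    (∀ t, HasDerivAt (fun s => (z s + L₁ * η * x₁ s) - E)
      (-(η * μ t) * ((z t + L₁ * η * x₁ t) - E)) t) ∧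
    (∀ t ≥ 0, |(z t + L₁ * η * x₁ t) - E| ≤
      |(z 0 + L₁ * η * x₁ 0) - E| * Real.exp (-(η * μmin) * t)) ∧
    Filter.Tendsto (fun t => (z t + L₁ * η * x₁ t) - E) Filter.atTop (nhds 0) := by
  have herror (t : ℝ) := observerError_hasDerivAt hL₁.ne' (hx₁ t) (hz t)
  have hdecay : ∀ t ≥ 0, |(z t + L₁ * η * x₁ t) - E| ≤
      |(z 0 + L₁ * η * x₁ 0) - E| * Real.exp (-(η * μmin) * t) := fun t ht => by
    simpa only [sub_zero] using abs_le_abs_mul_exp_of_hasDerivAt_neg_mul herror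
      (fun t => mul_le_mul_of_nonneg_left (hμ t).1 hη.le) ht
  exact ⟨herror, hdecay, tendsto_zero_of_abs_le_mul_exp_neg (mul_pos hη hμmin) hdecay⟩

theorem stmt_17 (E L₁ η μmin : ℝ) (hE : 0 < E) (hL₁ : 0 < L₁) (hη : 0 < η)
    (hμmin : 0 < μmin)
    (x₁ x₂ μ z : ℝ → ℝ)
    (hμ : ∀ t, μmin ≤ μ t ∧ μ t ≤ 1)
    -- simplified dynamics L₁ x₁' = μE - x₂
    (hx₁ : ∀ t, HasDerivAt x₁ ((μ t * E - x₂ t) / L₁) t)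
    -- observer: d̂₁ = z + L₁ η x₁, z' = η x₂ - η μ d̂₁
    (hz : ∀ t, HasDerivAt z (η * x₂ t - η * μ t * (z t + L₁ * η * x₁ t)) t) :
    (∀ t, HasDerivAt (fun s => (z s + L₁ * η * x₁ s) - E)
      (-(η * μ t) * ((z t + L₁ * η * x₁ t) - E)) t) ∧
    (∀ t ≥ 0, |(z t + L₁ * η * x₁ t) - E| ≤
      |(z 0 + L₁ * η * x₁ 0) - E| * Real.exp (-(η * μmin) * t)) ∧
    Filter.Tendsto (fun t => (z t + L₁ * η * x₁ t) - E) Filter.atTop (nhds 0) :=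
  stmt_17_general E L₁ η μmin hL₁ hη hμmin x₁ x₂ μ z hμ hx₁ hz
end
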